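/- For every ε > 0 there exists δ > 0 such that for all x, y ∈ X and all n ∈ ℕ: if ρ(m_T(x,n), m_T(y,n)) < δ then Ē_n(x,y) < ε, where ρ is the Prokhorov metric; and conversely for every ε > 0 there exists δ > 0 such that Ē_n(x,y) < δ implies ρ(m_T(x,n), m_T(y,n)) < ε. -/

import Mathlib

/-!
Both directions compare the two empirical measures through matchings `σ` of the orbit segments
`(T^k x)_{k<n}` and `(T^k y)_{k<n}`. If `∑ₖ d(T^k x, T^{σ k} y) ≤ r² n`, Markov's inequality
leaves at most `r n` indices with `d ≥ r`, so every set loses at most mass `r` when pushed into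
its `r`-thickening: `ρ ≤ r`. Conversely, `ρ < δ` says that every set `s` of indices has at least
`|s| - δ n` partners within distance `δ`; Hall's marriage theorem with defect `⌊δ n⌋` yields a
permutation that is `δ`-close off at most `δ n` indices, each of which costs at most `diam X`,
so `Ē_n ≤ δ (1 + diam X)`.
-/

open Filter MeasureTheory Topology
open scoped ENNReal NNReal

noncomputable def EnDist {X : Type*} [MetricSpace X] (T : X → X) (n : ℕ) (x y : X) : ℝ :=
  ⨅ σ : Equiv.Perm (Fin n), (1 / (n : ℝ)) * ∑ k : Fin n, dist (T^[(k : ℕ)] x) (T^[((σ k) : ℕ)] y)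

/-- The empirical measure `m_T(x,n) = (1/n) Σ_{j<n} δ_{T^j x}`. -/
noncomputable def empMeas {X : Type*} [MeasurableSpace X] (T : X → X) (x : X) (n : ℕ) :
    Measure X :=
  ((n : ℝ≥0∞))⁻¹ • ∑ j ∈ Finset.range n, MeasureTheory.Measure.dirac (T^[j] x)

open Finset Metric

theorem Equiv.Perm.exists_card_filter_not_rel_le {α : Type*} [Fintype α] [DecidableEq α]
    (r : α → α → Prop) [DecidableRel r] (m : ℕ)
    (hall : ∀ s : Finset α, #s ≤ #{j | ∃ i ∈ s, r i j} + m) :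
    ∃ σ : Equiv.Perm α, #{i | ¬ r i (σ i)} ≤ m := by
  -- `m` dummy targets related to every `i` absorb the defect
  let t : α → Finset (α ⊕ Fin m) := fun i => ({j | r i j} : Finset α).disjSum univ
  have ht : ∀ s : Finset α, #s ≤ #(s.biUnion t) := by
    intro s
    rcases s.eq_empty_or_nonempty with rfl | ⟨i₀, hi₀⟩
    · simp
    calc #s ≤ #(({j | ∃ i ∈ s, r i j} : Finset α).disjSum (univ : Finset (Fin m))) := by
          simpa [card_disjSum] using hall s
      _ ≤ #(s.biUnion t) := by
          refine card_le_card fun z hz => ?_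
          rcases z with j | k <;> simp_all [t]
          exact ⟨i₀, hi₀⟩
  obtain ⟨f, hf_inj, hf_mem⟩ := (all_card_le_biUnion_card_iff_exists_injective t).mp ht
  let Matched := {p : α × α // f p.1 = .inl p.2}
  obtain ⟨σ, hσ⟩ := Equiv.Perm.exists_extending_pair (fun p : Matched => p.1.1)
    (fun p : Matched => p.1.2)
    (by rintro ⟨⟨a, b⟩, hab⟩ ⟨⟨a', b'⟩, hab'⟩ (rfl : a = a')
        obtain rfl : b = b' := Sum.inl_injective (hab.symm.trans hab'); rfl)
    (by rintro ⟨⟨a, b⟩, hab⟩ ⟨⟨a', b'⟩, hab'⟩ (rfl : b = b')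
        obtain rfl : a = a' := hf_inj (hab.trans hab'.symm); rfl)
  refine ⟨σ, ?_⟩
  calc #{i | ¬ r i (σ i)} ≤ #(univ.map .inr : Finset (α ⊕ Fin m)) := by
        refine card_le_card_of_injOn f (fun i hi => ?_) hf_inj.injOn
        rcases hfi : f i with j | k
        · have hrij : r i j := by simpa [t, hfi] using hf_mem i
          exact absurd (hσ ⟨(i, j), hfi⟩ ▸ hrij) (mem_filter.1 hi).2
        · simp
    _ = m := by simp

theorem Finset.sum_le_mul_card_add_card_filter_mul {ι : Type*} [Fintype ι] {f : ι → ℝ} {δ D : ℝ}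
    (hδ : 0 ≤ δ) (hf : ∀ i, f i ≤ D) :
    ∑ i, f i ≤ δ * Fintype.card ι + #{i | δ ≤ f i} * D := by
  rw [← sum_filter_not_add_sum_filter univ (fun i => δ ≤ f i)]
  gcongr ?_ + ?_
  · calc ∑ i ∈ {i | ¬δ ≤ f i}, f i ≤ ∑ i ∈ {i | ¬δ ≤ f i}, δ :=
          sum_le_sum fun i hi => (not_le.1 (mem_filter.1 hi).2).le
      _ ≤ δ * Fintype.card ι := by
          rw [sum_const, nsmul_eq_mul, mul_comm]
          gcongr
          exact card_le_univ _
  · exact (sum_le_card_nsmul _ _ _ fun i _ => hf i).trans (by simp)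

open scoped Classical

namespace MeasureTheory.Measure

variable {ι X : Type*} [Fintype ι] [MeasurableSpace X]

noncomputable def empirical (u : ι → X) : Measure X :=
  (Fintype.card ι : ℝ≥0∞)⁻¹ • ∑ i, dirac (u i)

theorem empirical_apply [MeasurableSingletonClass X] (u : ι → X) (B : Set X) :
    empirical u B = #{i | u i ∈ B} / Fintype.card ι := by
  simp [empirical, dirac_apply, Set.indicator_apply, sum_boole, ENNReal.div_eq_inv_mul]

instance isFiniteMeasure_empirical [MeasurableSingletonClass X] (u : ι → X) :
    IsFiniteMeasure (empirical u) :=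
  ⟨by
    rw [empirical_apply]
    exact (ENNReal.div_le_of_le_mul (by simp)).trans_lt ENNReal.one_lt_top⟩

theorem empirical_comp_perm (u : ι → X) (σ : Equiv.Perm ι) :
    empirical (u ∘ σ) = empirical u := by
  simp only [empirical, Function.comp_apply, Equiv.sum_comp σ (fun i => dirac (u i))]

variable [PseudoMetricSpace X] [MeasurableSingletonClass X]

theorem empirical_le_empirical_thickening_add (u v : ι → X) (B : Set X) (δ : ℝ) :
    empirical u B ≤
      empirical v (thickening δ B) + #{i | δ ≤ dist (u i) (v i)} / Fintype.card ι := by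
  have hcard : #{i | u i ∈ B} ≤ #{i | v i ∈ thickening δ B} + #{i | δ ≤ dist (u i) (v i)} :=
    calc #{i | u i ∈ B}
        ≤ #(({i | v i ∈ thickening δ B} : Finset ι) ∪ ({i | δ ≤ dist (u i) (v i)} : Finset ι)) := by
          refine card_le_card fun i hi => ?_
          simp only [mem_union, mem_filter_univ] at hi ⊢
          rw [or_iff_not_imp_right, not_le]
          exact fun h => mem_thickening_iff.2 ⟨u i, hi, by rwa [dist_comm]⟩
      _ ≤ _ := card_union_le _ _
  rw [empirical_apply, empirical_apply, ← ENNReal.add_div]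
  gcongr
  exact_mod_cast hcard

theorem levyProkhorovEDist_empirical_le (u v : ι → X) {r : ℝ}
    (h : (#{i | r ≤ dist (u i) (v i)} : ℝ) ≤ r * Fintype.card ι) :
    levyProkhorovEDist (empirical u) (empirical v) ≤ ENNReal.ofReal r := by
  refine levyProkhorovEDist_le_of_forall _ _ _ fun ε B hε hε_top _ => ?_
  have hrε : r ≤ ε.toReal := (ENNReal.ofReal_le_iff_le_toReal hε_top.ne).1 hε.le
  have hbad : (#{i | ε.toReal ≤ dist (u i) (v i)} : ℝ≥0∞) / Fintype.card ι ≤ ε := by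
    refine ENNReal.div_le_of_le_mul ?_
    calc (#{i | ε.toReal ≤ dist (u i) (v i)} : ℝ≥0∞)
        ≤ #{i | r ≤ dist (u i) (v i)} := by gcongr
      _ ≤ ENNReal.ofReal (Fintype.card ι * r) := by
          rw [← ENNReal.ofReal_natCast]
          exact ENNReal.ofReal_le_ofReal (by linarith)
      _ ≤ ε * Fintype.card ι := by
          rw [ENNReal.ofReal_mul (by positivity), ENNReal.ofReal_natCast, mul_comm]
          gcongr
  have hvu := empirical_le_empirical_thickening_add v u B ε.toReal
  simp_rw [dist_comm (v _)] at hvu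
  exact ⟨(empirical_le_empirical_thickening_add u v B _).trans (by gcongr), hvu.trans (by gcongr)⟩

theorem card_le_card_filter_exists_dist_lt_add (u v : ι → X) {δ : ℝ}
    (h : levyProkhorovEDist (empirical u) (empirical v) < ENNReal.ofReal δ) (s : Finset ι) :
    (#s : ℝ) ≤ #{j | ∃ i ∈ s, dist (u i) (v j) < δ} + δ * Fintype.card ι := by
  have hδ : 0 < δ := ENNReal.ofReal_pos.1 (pos_of_gt h)
  rcases isEmpty_or_nonempty ι with hι | hι
  · simp [s.eq_empty_of_isEmpty]
  have hmeas := left_measure_le_of_levyProkhorovEDist_lt h (s.finite_toSet.image u).measurableSet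
  have hs : #s ≤ #{i | u i ∈ u '' s} := card_le_card fun i hi => by simpa using ⟨i, hi, rfl⟩
  have hthick : #{j | v j ∈ thickening δ (u '' s)} = #{j | ∃ i ∈ s, dist (u i) (v j) < δ} := by
    congr 1
    ext j
    simp [mem_thickening_iff, dist_comm]
  rw [ENNReal.toReal_ofReal hδ.le, empirical_apply, empirical_apply, hthick] at hmeas
  have hN : (Fintype.card ι : ℝ≥0∞) ≠ 0 := by simp
  have := (ENNReal.div_le_iff hN (ENNReal.natCast_ne_top _)).1
    ((ENNReal.div_le_div_right (Nat.cast_le.2 hs) _).trans hmeas)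
  rw [add_mul, ENNReal.div_mul_cancel hN (ENNReal.natCast_ne_top _)] at this
  rw [← ENNReal.ofReal_le_ofReal_iff (by positivity)]
  rwa [ENNReal.ofReal_add (by positivity) (by positivity), ENNReal.ofReal_mul hδ.le,
    ENNReal.ofReal_natCast, ENNReal.ofReal_natCast, ENNReal.ofReal_natCast]

theorem exists_perm_sum_dist_le_of_levyProkhorovEDist_lt [BoundedSpace X] (u v : ι → X) {δ : ℝ}
    (h : levyProkhorovEDist (empirical u) (empirical v) < ENNReal.ofReal δ) :
    ∃ σ : Equiv.Perm ι,
      ∑ i, dist (u i) (v (σ i)) ≤ δ * (1 + diam (Set.univ : Set X)) * Fintype.card ι := by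
  have hδ : 0 < δ := ENNReal.ofReal_pos.1 (pos_of_gt h)
  obtain ⟨σ, hσ⟩ := Equiv.Perm.exists_card_filter_not_rel_le (fun i j => dist (u i) (v j) < δ)
    ⌊δ * Fintype.card ι⌋₊ fun s => by
      rw [add_comm, ← Nat.floor_add_natCast (by positivity)]
      exact Nat.le_floor (by linarith [card_le_card_filter_exists_dist_lt_add u v h s])
  simp only [not_lt] at hσ
  refine ⟨σ, ?_⟩
  calc ∑ i, dist (u i) (v (σ i))
      ≤ δ * Fintype.card ι + #{i | δ ≤ dist (u i) (v (σ i))} * diam (Set.univ : Set X) :=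
        sum_le_mul_card_add_card_filter_mul hδ.le fun i =>
          dist_le_diam_of_mem (Bornology.isBounded_univ.2 ‹_›) trivial trivial
    _ ≤ δ * Fintype.card ι + δ * Fintype.card ι * diam (Set.univ : Set X) := by
        gcongr
        exact (Nat.cast_le.2 hσ).trans (Nat.floor_le (by positivity))
    _ = δ * (1 + diam (Set.univ : Set X)) * Fintype.card ι := by ring

theorem levyProkhorovEDist_empirical_le_of_sum_dist_le {r : ℝ} (hr : 0 < r) (u v : ι → X)
    (σ : Equiv.Perm ι) (h : ∑ i, dist (u i) (v (σ i)) ≤ r ^ 2 * Fintype.card ι) :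
    levyProkhorovEDist (empirical u) (empirical v) ≤ ENNReal.ofReal r := by
  rw [← empirical_comp_perm v σ]
  refine levyProkhorovEDist_empirical_le u (v ∘ σ) (le_of_mul_le_mul_right ?_ hr)
  calc #{i | r ≤ dist (u i) (v (σ i))} * r
      ≤ ∑ i ∈ {i | r ≤ dist (u i) (v (σ i))}, dist (u i) (v (σ i)) := by
        simpa using card_nsmul_le_sum _ _ r fun i hi => (mem_filter.1 hi).2
    _ ≤ ∑ i, dist (u i) (v (σ i)) :=
        sum_le_sum_of_subset_of_nonneg (subset_univ _) fun _ _ _ => dist_nonneg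
    _ ≤ r * Fintype.card ι * r := by linarith

end MeasureTheory.Measure

theorem empMeas_eq_empirical {X : Type*} [MeasurableSpace X] (T : X → X) (x : X) (n : ℕ) :
    empMeas T x n = Measure.empirical fun k : Fin n => T^[k] x := by
  simp [empMeas, Measure.empirical, Fin.sum_univ_eq_sum_range (fun j => Measure.dirac (T^[j] x))]

theorem EnDist_le {X : Type*} [MetricSpace X] (T : X → X) {n : ℕ} (x y : X)
    (σ : Equiv.Perm (Fin n)) : EnDist T n x y ≤ 1 / n * ∑ k : Fin n, dist (T^[k] x) (T^[σ k] y) :=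
  ciInf_le ⟨0, by rintro _ ⟨τ, rfl⟩; positivity⟩ σ

theorem prokhorov_EnDist_uniformly_equivalent {X : Type*} [MetricSpace X] [CompactSpace X]
    [MeasurableSpace X] [BorelSpace X] (T : X → X) :
    (∀ ε > (0 : ℝ), ∃ δ > (0 : ℝ), ∀ x y : X, ∀ n : ℕ, 0 < n →
      levyProkhorovDist (empMeas T x n) (empMeas T y n) < δ → EnDist T n x y < ε) ∧
    (∀ ε > (0 : ℝ), ∃ δ > (0 : ℝ), ∀ x y : X, ∀ n : ℕ, 0 < n →
      EnDist T n x y < δ → levyProkhorovDist (empMeas T x n) (empMeas T y n) < ε) := by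
  simp only [empMeas_eq_empirical]
  set D := diam (Set.univ : Set X)
  have hD : 0 ≤ D := diam_nonneg
  refine ⟨fun ε hε => ⟨ε / (2 + D), by positivity, fun x y n hn hρ => ?_⟩,
    fun ε hε => ⟨(ε / 2) ^ 2, by positivity, fun x y n hn hE => ?_⟩⟩
  · obtain ⟨σ, hσ⟩ := Measure.exists_perm_sum_dist_le_of_levyProkhorovEDist_lt _ _
      ((ENNReal.lt_ofReal_iff_toReal_lt (levyProkhorovEDist_ne_top _ _)).2 hρ)
    calc EnDist T n x y ≤ 1 / n * ∑ k : Fin n, dist (T^[k] x) (T^[σ k] y) := EnDist_le T x y σ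
      _ ≤ 1 / n * (ε / (2 + D) * (1 + D) * n) := by gcongr; simpa using hσ
      _ = ε * ((1 + D) / (2 + D)) := by field_simp
      _ < ε := mul_lt_of_lt_one_right hε ((div_lt_one (by positivity)).2 (by linarith))
  · obtain ⟨σ, hσ⟩ := exists_lt_of_ciInf_lt hE
    rw [one_div, inv_mul_lt_iff₀ (by positivity)] at hσ
    have hρ := Measure.levyProkhorovEDist_empirical_le_of_sum_dist_le (half_pos hε)
      (fun k : Fin n => T^[k] x) (fun k => T^[k] y) σ (by simpa [mul_comm] using hσ.le)
    calc _ ≤ ε / 2 := ENNReal.toReal_le_of_le_ofReal (by positivity) hρ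
      _ < ε := half_lt_self hε
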